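/- Each g_k is a finitely supported nonnegative sequence, the sequence is coefficientwise monotone, i.e. 0 ≤ (g_k)_n ≤ (g_{k+1})_n for all n ∈ ℤ and all k ≥ 0, and ∑_{n∈ℤ} (g_k)_n ≤ 1 for every k. Moreover there exists a sequence g : ℤ → ℝ with g_n ≥ 0 for all n, ∑_{n∈ℤ} g_n ≤ 1, (g_k)_n ≤ g_n for all k and n, and lim_{k→∞} ∑_{n∈ℤ} |(g_k)_n − g_n| = 0 (convergence in the Wiener norm). -/
import Mathlib


open Filter Topology

/- Convention: the transition probabilities a_{i,j} (i,j ∈ {−1,0,1}) are encoded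
as `v : Fin 3 → Fin 3 → ℝ`, where the index `0, 1, 2` corresponds to `−1, 0, 1`.
So `v i j = a_{i−1, j−1}` in the notation of the paper. -/

/-- The finitely supported two-sided sequence with values `c 0, c 1, c 2` at
indices `−1, 0, 1` and zero elsewhere. -/
noncomputable def triSeq (c : Fin 3 → ℝ) : ℤ → ℝ := fun n =>
  if n = -1 then c 0 else if n = 0 then c 1 else if n = 1 then c 2 else 0

/-- Convolution of two-sided sequences. -/
noncomputable def zconv (a b : ℤ → ℝ) : ℤ → ℝ := fun n => ∑' k : ℤ, a k * b (n - k)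

/-- The iteration g_0 = 0, g_{k+1} = a_{−1} + a_0 ⋆ g_k + a_1 ⋆ g_k ⋆ g_k. -/
noncomputable def gIter (am1 a0 a1 : ℤ → ℝ) : ℕ → ℤ → ℝ
  | 0 => fun _ => 0
  | k + 1 => fun n =>
      am1 n + zconv a0 (gIter am1 a0 a1 k) n +
        zconv a1 (zconv (gIter am1 a0 a1 k) (gIter am1 a0 a1 k)) n

section aux

open Function Pointwise

lemma triSeq_support (c : Fin 3 → ℝ) :
    support (triSeq c) ⊆ ({-1, 0, 1} : Set ℤ) := by
  intro n hn
  simp only [mem_support, triSeq] at hn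
  by_contra h
  simp only [Set.mem_insert_iff, Set.mem_singleton_iff, not_or] at h
  simp [h.1, h.2.1, h.2.2] at hn

lemma triSeq_support_finite (c : Fin 3 → ℝ) : (support (triSeq c)).Finite :=
  (((Set.finite_singleton (1 : ℤ)).insert 0).insert (-1)).subset (triSeq_support c)

lemma triSeq_nonneg {c : Fin 3 → ℝ} (hc : ∀ i, 0 ≤ c i) (n : ℤ) : 0 ≤ triSeq c n := by
  unfold triSeq
  split_ifs <;> first | exact hc _ | exact le_refl 0

lemma triSeq_tsum (c : Fin 3 → ℝ) : ∑' n : ℤ, triSeq c n = c 0 + c 1 + c 2 := by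
  rw [tsum_eq_sum (s := ({-1, 0, 1} : Finset ℤ)) (fun n hn => by
    simp only [Finset.mem_insert, Finset.mem_singleton, not_or] at hn
    simp [triSeq, hn.1, hn.2.1, hn.2.2])]
  norm_num [triSeq]
  ring

lemma zconv_term_summable {a b : ℤ → ℝ} (ha : (support a).Finite) (n : ℤ) :
    Summable (fun k => a k * b (n - k)) := by
  apply summable_of_ne_finset_zero (s := ha.toFinset)
  intro k hk
  have : a k = 0 := by
    by_contra h
    exact hk (by simpa using h)
  simp [this]

lemma zconv_nonneg {a b : ℤ → ℝ} (ha : ∀ n, 0 ≤ a n) (hb : ∀ n, 0 ≤ b n) (n : ℤ) :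
    0 ≤ zconv a b n :=
  tsum_nonneg fun k => mul_nonneg (ha k) (hb _)

lemma zconv_support {a b : ℤ → ℝ} : support (zconv a b) ⊆ support a + support b := by
  intro n hn
  by_contra h
  apply hn
  have : ∀ k : ℤ, a k * b (n - k) = 0 := by
    intro k
    by_contra hk
    rcases mul_ne_zero_iff.mp hk with ⟨h1, h2⟩
    exact h ⟨k, h1, n - k, h2, by ring⟩
  simp only [mem_support, not_not, zconv]
  simp [this]

lemma zconv_support_finite {a b : ℤ → ℝ} (ha : (support a).Finite)
    (hb : (support b).Finite) : (support (zconv a b)).Finite :=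
  (ha.add hb).subset zconv_support

lemma support_subset_of_le {a a' : ℤ → ℝ} (ha : ∀ n, 0 ≤ a n) (h : ∀ n, a n ≤ a' n) :
    support a ⊆ support a' := by
  intro n hn
  simp only [mem_support] at hn ⊢
  intro h0
  exact hn (le_antisymm (h0 ▸ h n) (ha n))

lemma zconv_mono {a a' b b' : ℤ → ℝ} (ha' : (support a').Finite)
    (ha0 : ∀ n, 0 ≤ a n) (hb0 : ∀ n, 0 ≤ b n) (hb0' : ∀ n, 0 ≤ b' n)
    (haa : ∀ n, a n ≤ a' n) (hbb : ∀ n, b n ≤ b' n) (n : ℤ) :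
    zconv a b n ≤ zconv a' b' n := by
  have hsa : (support a).Finite := ha'.subset (support_subset_of_le ha0 haa)
  refine Summable.tsum_le_tsum (fun k => ?_) (zconv_term_summable hsa n) (zconv_term_summable ha' n)
  exact mul_le_mul (haa k) (hbb _) (hb0 _) (le_trans (ha0 k) (haa k))

lemma zconv_double_summable {a b : ℤ → ℝ} (ha : (support a).Finite)
    (hb : (support b).Finite) :
    Summable (Function.uncurry (fun (k n : ℤ) => a k * b (n - k))) := by
  apply summable_of_finite_support
  apply Set.Finite.subset ((ha.prod hb).image (fun q : ℤ × ℤ => (q.1, q.1 + q.2)))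
  intro p hp
  simp only [mem_support, Function.uncurry] at hp
  rcases mul_ne_zero_iff.mp hp with ⟨h1, h2⟩
  exact ⟨(p.1, p.2 - p.1), ⟨h1, h2⟩, by simp⟩

lemma zconv_tsum {a b : ℤ → ℝ} (ha : (support a).Finite) (hb : (support b).Finite) :
    ∑' n : ℤ, zconv a b n = (∑' n : ℤ, a n) * (∑' n : ℤ, b n) := by
  have hF := zconv_double_summable ha hb
  calc ∑' (n : ℤ) (k : ℤ), a k * b (n - k)
      = ∑' (k : ℤ) (n : ℤ), a k * b (n - k) := Summable.tsum_comm hF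
    _ = ∑' (k : ℤ), a k * ∑' (n : ℤ), b (n - k) := by
        refine tsum_congr fun k => ?_
        exact tsum_mul_left
    _ = ∑' (k : ℤ), a k * ∑' (n : ℤ), b n := by
        refine tsum_congr fun k => ?_
        congr 1
        exact (Equiv.subRight k).tsum_eq b
    _ = (∑' n : ℤ, a n) * (∑' n : ℤ, b n) := tsum_mul_right

end aux

/- STATEMENT 13: each g_k is finitely supported, nonnegative and the sequence is
coefficientwise monotone with ∑_n (g_k)_n ≤ 1, and g_k converges in the Wiener
norm to a nonnegative sequence g with ∑_n g_n ≤ 1 dominating every g_k. -/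

theorem stmt13 (v : Fin 3 → Fin 3 → ℝ) (hnn : ∀ i j, 0 ≤ v i j)
    (hsum : ∑ i, ∑ j, v i j = 1)
    (gk : ℕ → ℤ → ℝ)
    (hgk : gk = gIter (triSeq (v 0)) (triSeq (v 1)) (triSeq (v 2))) :
    (∀ k, (Function.support (gk k)).Finite) ∧
    (∀ k n, 0 ≤ gk k n ∧ gk k n ≤ gk (k + 1) n) ∧
    (∀ k, (∑' n : ℤ, gk k n) ≤ 1) ∧
    ∃ g : ℤ → ℝ, (∀ n, 0 ≤ g n) ∧ Summable (fun n => |g n|) ∧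
      (∑' n : ℤ, g n) ≤ 1 ∧ (∀ k n, gk k n ≤ g n) ∧
      Tendsto (fun k => ∑' n : ℤ, |gk k n - g n|) atTop (𝓝 0) := by
  set A := triSeq (v 0) with hA
  set B := triSeq (v 1) with hB
  set C := triSeq (v 2) with hC
  have hAfin : (Function.support A).Finite := triSeq_support_finite _
  have hBfin : (Function.support B).Finite := triSeq_support_finite _
  have hCfin : (Function.support C).Finite := triSeq_support_finite _
  have hAnn : ∀ n, 0 ≤ A n := triSeq_nonneg (hnn 0)
  have hBnn : ∀ n, 0 ≤ B n := triSeq_nonneg (hnn 1)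
  have hCnn : ∀ n, 0 ≤ C n := triSeq_nonneg (hnn 2)
  have hrec : ∀ k n, gk (k + 1) n
      = A n + zconv B (gk k) n + zconv C (zconv (gk k) (gk k)) n := by
    intro k n; rw [hgk]; rfl
  have h0 : ∀ n, gk 0 n = 0 := by intro n; rw [hgk]; rfl
  -- finite support and nonnegativity, by induction
  have key : ∀ k, (Function.support (gk k)).Finite ∧ (∀ n, 0 ≤ gk k n) := by
    intro k
    induction k with
    | zero =>
      constructor
      · have : Function.support (gk 0) = ∅ := by
          ext n; simp [h0]
        rw [this]; exact Set.finite_empty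
      · intro n; simp [h0]
    | succ k ih =>
      obtain ⟨ihf, ihn⟩ := ih
      constructor
      · apply Set.Finite.subset
          (hAfin.union ((zconv_support_finite hBfin ihf).union
            (zconv_support_finite hCfin (zconv_support_finite ihf ihf))))
        intro n hn
        simp only [Function.mem_support] at hn
        by_contra h
        simp only [Set.mem_union, Function.mem_support, not_or, not_not] at h
        rw [hrec k n, h.1, h.2.1, h.2.2] at hn
        simp at hn
      · intro n
        rw [hrec k n]
        have h1 := zconv_nonneg hBnn ihn n
        have h2 := zconv_nonneg hCnn (zconv_nonneg ihn ihn) n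
        have h3 := hAnn n
        linarith
  -- monotonicity, by induction
  have mono : ∀ k n, gk k n ≤ gk (k + 1) n := by
    intro k
    induction k with
    | zero => intro n; rw [h0]; exact (key 1).2 n
    | succ k ih =>
      intro n
      rw [hrec k n, hrec (k + 1) n]
      have hk := key k
      have hk1 := key (k + 1)
      have h1 : zconv B (gk k) n ≤ zconv B (gk (k + 1)) n :=
        zconv_mono hBfin hBnn hk.2 hk1.2 (fun _ => le_refl _) ih n
      have h2 : zconv C (zconv (gk k) (gk k)) n ≤
          zconv C (zconv (gk (k + 1)) (gk (k + 1))) n := by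
        refine zconv_mono hCfin hCnn (zconv_nonneg hk.2 hk.2)
          (zconv_nonneg hk1.2 hk1.2) (fun _ => le_refl _) (fun m => ?_) n
        calc zconv (gk k) (gk k) m ≤ zconv (gk (k + 1)) (gk k) m :=
              zconv_mono hk1.1 hk.2 hk.2 hk.2 ih (fun _ => le_refl _) m
          _ ≤ zconv (gk (k + 1)) (gk (k + 1)) m :=
              zconv_mono hk1.1 hk1.2 hk.2 hk1.2 (fun _ => le_refl _) ih m
      linarith
  -- total mass bounds
  have hAt : ∑' n : ℤ, A n = v 0 0 + v 0 1 + v 0 2 := triSeq_tsum _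
  have hBt : ∑' n : ℤ, B n = v 1 0 + v 1 1 + v 1 2 := triSeq_tsum _
  have hCt : ∑' n : ℤ, C n = v 2 0 + v 2 1 + v 2 2 := triSeq_tsum _
  have hsum' : (v 0 0 + v 0 1 + v 0 2) + (v 1 0 + v 1 1 + v 1 2)
      + (v 2 0 + v 2 1 + v 2 2) = 1 := by
    simpa [Fin.sum_univ_three] using hsum
  have tsumle : ∀ k, (∑' n : ℤ, gk k n) ≤ 1 := by
    intro k
    induction k with
    | zero => simp [h0]
    | succ k ih =>
      have hk := key k
      have hSnn : 0 ≤ ∑' n : ℤ, gk k n := tsum_nonneg hk.2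
      have e1 : (fun n => gk (k + 1) n)
          = fun n => A n + zconv B (gk k) n + zconv C (zconv (gk k) (gk k)) n := by
        funext n; exact hrec k n
      have sA : Summable A := summable_of_finite_support hAfin
      have sB : Summable (zconv B (gk k)) :=
        summable_of_finite_support (zconv_support_finite hBfin hk.1)
      have sC : Summable (zconv C (zconv (gk k) (gk k))) :=
        summable_of_finite_support
          (zconv_support_finite hCfin (zconv_support_finite hk.1 hk.1))
      have : (∑' n : ℤ, gk (k + 1) n) = (∑' n : ℤ, A n) + (∑' n : ℤ, zconv B (gk k) n)
          + (∑' n : ℤ, zconv C (zconv (gk k) (gk k)) n) := by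
        rw [show (fun n => gk (k+1) n) = gk (k+1) from rfl] at e1
        rw [e1, Summable.tsum_add (sA.add sB) sC, Summable.tsum_add sA sB]
      rw [this, zconv_tsum hBfin hk.1, zconv_tsum hCfin (zconv_support_finite hk.1 hk.1),
        zconv_tsum hk.1 hk.1, hAt, hBt, hCt]
      have h1 : 0 ≤ v 1 0 + v 1 1 + v 1 2 := by
        have := hnn 1 0; have := hnn 1 1; have := hnn 1 2; linarith
      have h2 : 0 ≤ v 2 0 + v 2 1 + v 2 2 := by
        have := hnn 2 0; have := hnn 2 1; have := hnn 2 2; linarith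
      nlinarith [mul_le_one₀ ih hSnn ih]
  refine ⟨fun k => (key k).1, fun k n => ⟨(key k).2 n, mono k n⟩, tsumle, ?_⟩
  -- the limit sequence
  have hmono : ∀ n, Monotone (fun k => gk k n) := by
    intro n
    exact monotone_nat_of_le_succ fun k => mono k n
  have hbd : ∀ n, BddAbove (Set.range fun k => gk k n) := by
    intro n
    refine ⟨1, ?_⟩
    rintro x ⟨k, rfl⟩
    have h1 : gk k n ≤ ∑' m : ℤ, gk k m :=
      Summable.le_tsum (summable_of_finite_support (key k).1) n
        (fun j _ => (key k).2 j)
    exact h1.trans (tsumle k)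
  set g : ℤ → ℝ := fun n => ⨆ k, gk k n with hg
  have hconv : ∀ n, Tendsto (fun k => gk k n) atTop (𝓝 (g n)) := fun n =>
    tendsto_atTop_ciSup (hmono n) (hbd n)
  have hgnn : ∀ n, 0 ≤ g n := by
    intro n
    have := le_ciSup (hbd n) 0
    simpa [h0, hg] using this
  have hdom : ∀ k n, gk k n ≤ g n := fun k n => le_ciSup (hbd n) k
  have hsumle : ∀ s : Finset ℤ, ∑ n ∈ s, g n ≤ 1 := by
    intro s
    have ht : Tendsto (fun k => ∑ n ∈ s, gk k n) atTop (𝓝 (∑ n ∈ s, g n)) :=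
      tendsto_finset_sum s fun n _ => hconv n
    refine le_of_tendsto ht (Eventually.of_forall fun k => ?_)
    have : ∑ n ∈ s, gk k n ≤ ∑' n : ℤ, gk k n :=
      Summable.sum_le_tsum s (fun n _ => (key k).2 n)
        (summable_of_finite_support (key k).1)
    exact this.trans (tsumle k)
  have hgsum : Summable g := summable_of_sum_le hgnn hsumle
  have hgt : (∑' n : ℤ, g n) ≤ 1 := Summable.tsum_le_of_sum_le hgsum hsumle
  refine ⟨g, hgnn, ?_, hgt, hdom, ?_⟩
  · exact hgsum.congr fun n => (abs_of_nonneg (hgnn n)).symm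
  · have := tendsto_tsum_of_dominated_convergence (𝓕 := atTop)
      (f := fun k n => |gk k n - g n|) (g := fun _ => (0 : ℝ)) (bound := g) hgsum
      (fun n => by
        have h1 : Tendsto (fun k => gk k n - g n) atTop (𝓝 (g n - g n)) :=
          (hconv n).sub tendsto_const_nhds
        rw [sub_self] at h1
        simpa using h1.abs)
      (Eventually.of_forall fun k => by
        intro n
        have h1 := (key k).2 n
        have h2 := hdom k n
        have h3 := hgnn n
        rw [Real.norm_eq_abs, abs_abs]
        rw [abs_le]
        constructor <;> linarith)
    simpa using this
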